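/- Let E_1, ..., E_t be pairwise disjoint events in a probability space such that the probability of their union is p and each E_i has probability at most p/2. Then there exists a partition of [t] into two sets X and Y such that for each Z in {X, Y}, the probability of the union of the events indexed by Z lies in the interval [p/4, 3p/4]. -/

import Mathlib

/-!
Only the weights `P(E_i)` matter, and the union weighs their sum `p`. Among the subfamilies of
weight at most `3p/4` take one of maximal weight. Were it lighter than `p/4`, any further event
(of weight at most `p/2`) could be added to it, so every event outside it is null and it weighs
all of `p`. Its complement then weighs `p` minus its weight, also in `[p/4, 3p/4]`.
-/

open Finset

theorem Finset.exists_sum_mem_Icc_of_le {ι : Type*} [Fintype ι] (a : ι → ℝ)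
    (ha : ∀ i, 0 ≤ a i) {c δ : ℝ} (hδ : ∀ i, a i ≤ δ) (hcδ : 0 ≤ c + δ)
    (hc : c ≤ ∑ i, a i) :
    ∃ X : Finset ι, c ≤ ∑ i ∈ X, a i ∧ ∑ i ∈ X, a i ≤ c + δ := by
  classical
  obtain ⟨X, hX, hmax⟩ := exists_max_image ({X | ∑ i ∈ X, a i ≤ c + δ} : Finset (Finset ι))
    (fun X => ∑ i ∈ X, a i) ⟨∅, by simpa using hcδ⟩
  have hXle : ∑ i ∈ X, a i ≤ c + δ := (mem_filter.mp hX).2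
  refine ⟨X, ?_, hXle⟩
  by_contra! hlt
  have hcompl_zero : ∀ i ∈ Xᶜ, a i = 0 := by
    intro i hi
    have hinsert : ∑ j ∈ insert i X, a j = a i + ∑ j ∈ X, a j :=
      sum_insert (mem_compl.mp hi)
    have hle := hmax (insert i X) (mem_filter.mpr ⟨mem_univ _, by linarith [hδ i]⟩)
    linarith [ha i]
  have htotal : ∑ i, a i = ∑ i ∈ X, a i := by
    rw [← sum_add_sum_compl X a, sum_eq_zero hcompl_zero, add_zero]
  linarith

theorem Finset.exists_sum_and_sum_compl_mem_Icc {ι : Type*} [Fintype ι] [DecidableEq ι]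
    (a : ι → ℝ)
    (ha : ∀ i, 0 ≤ a i) (hhalf : ∀ i, a i ≤ (∑ j, a j) / 2) :
    ∃ X : Finset ι,
      (∑ j, a j) / 4 ≤ ∑ i ∈ X, a i ∧ ∑ i ∈ X, a i ≤ 3 * (∑ j, a j) / 4 ∧
      (∑ j, a j) / 4 ≤ ∑ i ∈ Xᶜ, a i ∧ ∑ i ∈ Xᶜ, a i ≤ 3 * (∑ j, a j) / 4 := by
  have htotal_nonneg : 0 ≤ ∑ j, a j := sum_nonneg fun i _ => ha i
  obtain ⟨X, hXge, hXle⟩ := exists_sum_mem_Icc_of_le a ha (c := (∑ j, a j) / 4) hhalf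
    (by linarith) (by linarith)
  have hcompl := sum_add_sum_compl X a
  exact ⟨X, hXge, by linarith, by linarith, by linarith⟩

theorem event_partition_general
    {Ω : Type*} [Fintype Ω] [DecidableEq Ω] (w : Ω → ℝ) (hw : ∀ ω, 0 ≤ w ω)
    (t : ℕ) (E : Fin t → Finset Ω)
    (hdisj : ∀ i j, i ≠ j → Disjoint (E i) (E j))
    (p : ℝ)
    (hp : ∑ ω ∈ Finset.univ.biUnion E, w ω = p)
    (hsmall : ∀ i, ∑ ω ∈ E i, w ω ≤ p / 2) :
    ∃ X : Finset (Fin t),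
      p / 4 ≤ ∑ ω ∈ X.biUnion E, w ω ∧ ∑ ω ∈ X.biUnion E, w ω ≤ 3 * p / 4 ∧
      p / 4 ≤ ∑ ω ∈ Xᶜ.biUnion E, w ω ∧ ∑ ω ∈ Xᶜ.biUnion E, w ω ≤ 3 * p / 4 := by
  have hsum_biUnion (X : Finset (Fin t)) :
      ∑ ω ∈ X.biUnion E, w ω = ∑ i ∈ X, ∑ ω ∈ E i, w ω :=
    sum_biUnion fun i _ j _ hij => hdisj i j hij
  rw [hsum_biUnion] at hp
  subst hp
  simpa only [hsum_biUnion] using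
    exists_sum_and_sum_compl_mem_Icc (fun i => ∑ ω ∈ E i, w ω)
      (fun i => sum_nonneg fun ω _ => hw ω) hsmall

/-- Disjoint events with union of probability `p`, each of probability at most `p/2`,
can be partitioned into two groups each of probability in `[p/4, 3p/4]`. -/
theorem event_partition
    {Ω : Type*} [Fintype Ω] [DecidableEq Ω] (w : Ω → ℝ) (hw : ∀ ω, 0 ≤ w ω)
    (hw1 : ∑ ω, w ω = 1)
    (t : ℕ) (E : Fin t → Finset Ω)
    (hdisj : ∀ i j, i ≠ j → Disjoint (E i) (E j))
    (p : ℝ)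
    (hp : ∑ ω ∈ Finset.univ.biUnion E, w ω = p)
    (hsmall : ∀ i, ∑ ω ∈ E i, w ω ≤ p / 2) :
    ∃ X : Finset (Fin t),
      p / 4 ≤ ∑ ω ∈ X.biUnion E, w ω ∧ ∑ ω ∈ X.biUnion E, w ω ≤ 3 * p / 4 ∧
      p / 4 ≤ ∑ ω ∈ Xᶜ.biUnion E, w ω ∧ ∑ ω ∈ Xᶜ.biUnion E, w ω ≤ 3 * p / 4 :=
  event_partition_general w hw t E hdisj p hp hsmall
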